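/- arXiv:2401.11200 — 2 statements merged into one kernel-verified Lean document; each statement's English description precedes it below -/
import Mathlib

section
/- Main discrete extension theorem: Let U ⊆ ℝⁿ, f : U × W → U be C¹, V : U → ℝ≥0 be C² with V⁻¹(0) compact nonempty and V(f(x,w)) = V(x) for all x ∈ U, w ∈ W. Suppose there exist b, ε > 0 with V⁻¹([0,ε]) compact and ‖∇V(x)‖² ≥ bV(x) on V⁻¹([0,ε]), and δ > 0 with S_δ := {x : dist(x, V⁻¹([0,ε])) < δ} ⊆ U. Let L := max{‖∇V(x)‖ : x ∈ V⁻¹([0,ε])} and d > λ_max(D²V(x)) for all x ∈ S_δ. If 0 < α < min(2/d, δ/L), then for any trajectory x̃_{k+1} = f(x̃_k, w_k) - α∇V(f(x̃_k, w_k)) with x̃_0 ∈ V⁻¹([0,ε]) and w_k ∈ W, one has V(x̃_k) ≤ (1 - b(α - α²d/2))^k V(x̃_0), i.e. the trajectory converges to V⁻¹(0) exponentially fast. -/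
/-!
The step `y ↦ y - α ∇V(y)` is a gradient-descent step for `V`. Along the segment from `y` to
`y - α ∇V(y)` the Hessian of `V` is bounded by `d`, so the second-order Taylor bound gives
`V(y - α∇V(y)) ≤ V(y) - (α - α²d/2)‖∇V(y)‖² ≤ (1 - b(α - α²d/2)) V(y)` by the
Polyak–Łojasiewicz inequality `bV ≤ ‖∇V‖²`. The condition `αL < δ` keeps that segment inside
`S_δ`, and since `f` preserves `V` the sublevel set `K` is invariant under the whole update, so
the contraction factor applies at every step.
-/

open Metric Set
open scoped RealInnerProductSpace

lemma antitoneOn_Icc_of_hasDerivAt_nonpos {f f' : ℝ → ℝ} {a b : ℝ}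
    (hf : ∀ t ∈ Icc a b, HasDerivAt f (f' t) t) (hf' : ∀ t ∈ Icc a b, f' t ≤ 0) :
    AntitoneOn f (Icc a b) := by
  refine antitoneOn_of_hasDerivWithinAt_nonpos (f' := f') (convex_Icc a b)
    (fun t ht => (hf t ht).continuousAt.continuousWithinAt) (fun t ht => ?_) (fun t ht => ?_)
  · rw [interior_Icc] at ht ⊢
    exact (hf t (Ioo_subset_Icc_self ht)).hasDerivWithinAt
  · rw [interior_Icc] at ht
    exact hf' t (Ioo_subset_Icc_self ht)

lemma le_add_add_half_of_deriv_le {g g' g'' : ℝ → ℝ} {M : ℝ}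
    (hg : ∀ t ∈ Icc (0 : ℝ) 1, HasDerivAt g (g' t) t)
    (hg' : ∀ t ∈ Icc (0 : ℝ) 1, HasDerivAt g' (g'' t) t)
    (hM : ∀ t ∈ Icc (0 : ℝ) 1, g'' t ≤ M) :
    g 1 ≤ g 0 + g' 0 + M / 2 := by
  have h0 : (0 : ℝ) ∈ Icc (0 : ℝ) 1 := ⟨le_rfl, zero_le_one⟩
  have h1 : (1 : ℝ) ∈ Icc (0 : ℝ) 1 := ⟨zero_le_one, le_rfl⟩
  have hslope : ∀ t ∈ Icc (0 : ℝ) 1, g' t ≤ g' 0 + t * M := by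
    have hanti := antitoneOn_Icc_of_hasDerivAt_nonpos (f := fun t => g' t - t * M)
      (fun t ht => (hg' t ht).sub (hasDerivAt_mul_const M)) (fun t ht => sub_nonpos.2 (hM t ht))
    intro t ht
    have := hanti h0 ht ht.1
    simp only [zero_mul, sub_zero] at this
    linarith
  have hφ := antitoneOn_Icc_of_hasDerivAt_nonpos (f := fun t => g t - t * g' 0 - t ^ 2 * (M / 2))
    (f' := fun t => g' t - g' 0 - t * M)
    (fun t ht => ((hg t ht).sub (hasDerivAt_mul_const (g' 0))).sub
      (((hasDerivAt_pow 2 t).mul_const (M / 2)).congr_deriv (by norm_num; ring)))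
    (fun t ht => by linarith [hslope t ht])
  have := hφ h0 h1 zero_le_one
  norm_num at this
  linarith

section Descent

variable {E : Type*} [NormedAddCommGroup E] [InnerProductSpace ℝ E] [CompleteSpace E]
  {V : E → ℝ} {S : Set E} {y : E} {d : ℝ}

theorem le_add_inner_gradient_add_of_hessian_le (hS : IsOpen S) (hV : ContDiffOn ℝ 2 V S)
    {v : E} (hseg : segment ℝ y (y + v) ⊆ S)
    (hd : ∀ x ∈ S, iteratedFDeriv ℝ 2 V x ![v, v] ≤ d * ‖v‖ ^ 2) :
    V (y + v) ≤ V y + ⟪gradient V y, v⟫ + d / 2 * ‖v‖ ^ 2 := by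
  have hc : ∀ t ∈ Icc (0 : ℝ) 1, y + t • v ∈ S := fun t ht =>
    hseg (by rw [segment_eq_image']; exact ⟨t, ht, by simp⟩)
  have hVat : ∀ t ∈ Icc (0 : ℝ) 1, ContDiffAt ℝ 2 V (y + t • v) := fun t ht =>
    hV.contDiffAt (hS.mem_nhds (hc t ht))
  have hline (t : ℝ) : HasDerivAt (fun s : ℝ => y + s • v) v t := by
    simpa using ((hasDerivAt_id t).smul_const v).const_add y
  have hderiv : ∀ t ∈ Icc (0 : ℝ) 1,
      HasDerivAt (fun s => V (y + s • v)) (fderiv ℝ V (y + t • v) v) t := fun t ht =>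
    ((hVat t ht).differentiableAt (by norm_num)).hasFDerivAt.comp_hasDerivAt t (hline t)
  have hderiv2 : ∀ t ∈ Icc (0 : ℝ) 1, HasDerivAt (fun s => fderiv ℝ V (y + s • v) v)
      (fderiv ℝ (fderiv ℝ V) (y + t • v) v v) t := fun t ht => by
    have hDV := ((hVat t ht).fderiv_right (m := 1) (by norm_num)).differentiableAt (by norm_num)
    have hDV' : HasDerivAt (fun s => fderiv ℝ V (y + s • v))
        (fderiv ℝ (fderiv ℝ V) (y + t • v) v) t :=
      hDV.hasFDerivAt.comp_hasDerivAt t (hline t)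
    simpa using hDV'.clm_apply (hasDerivAt_const t v)
  have hhess : ∀ t ∈ Icc (0 : ℝ) 1, fderiv ℝ (fderiv ℝ V) (y + t • v) v v ≤ d * ‖v‖ ^ 2 :=
    fun t ht => by simpa [iteratedFDeriv_two_apply] using hd _ (hc t ht)
  have htaylor := le_add_add_half_of_deriv_le hderiv hderiv2 hhess
  simp only [one_smul, zero_smul, add_zero] at htaylor
  rw [inner_gradient_left]
  linarith

theorem gradient_step_le (hS : IsOpen S) (hV : ContDiffOn ℝ 2 V S) {α b : ℝ}
    (hseg : segment ℝ y (y - α • gradient V y) ⊆ S)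
    (hd : ∀ x ∈ S, ∀ v, iteratedFDeriv ℝ 2 V x ![v, v] ≤ d * ‖v‖ ^ 2)
    (hPL : b * V y ≤ ‖gradient V y‖ ^ 2) (hαd : 0 ≤ α - α ^ 2 * d / 2) :
    V (y - α • gradient V y) ≤ (1 - b * (α - α ^ 2 * d / 2)) * V y := by
  rw [sub_eq_add_neg] at hseg ⊢
  have hdescent := le_add_inner_gradient_add_of_hessian_le hS hV hseg (fun x hx => hd x hx _)
  rw [inner_neg_right, inner_smul_right, real_inner_self_eq_norm_sq, norm_neg, norm_smul,
    Real.norm_eq_abs, mul_pow, sq_abs] at hdescent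
  nlinarith [mul_le_mul_of_nonneg_left hPL hαd]

end Descent

lemma le_pow_mul_of_le_mul {u : ℕ → ℝ} {ρ : ℝ} (hu : ∀ k, 0 ≤ u k)
    (h : ∀ k, u (k + 1) ≤ ρ * u k) (k : ℕ) : u k ≤ ρ ^ k * u 0 := by
  rcases le_or_gt 0 ρ with hρ | hρ
  · exact le_geom hρ k fun j _ => h j
  -- for `ρ < 0` the hypotheses force `u = 0`
  have hu0 : u 0 = 0 := le_antisymm (by nlinarith [h 0, hu 1]) (hu 0)
  rcases k with _ | j
  · simp
  · rw [hu0, mul_zero]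
    exact (h j).trans (mul_nonpos_of_nonpos_of_nonneg hρ.le (hu j))

theorem discrete_extension_main_general
    {n m : ℕ} (U : Set (EuclideanSpace ℝ (Fin n))) (W : Set (EuclideanSpace ℝ (Fin m)))
    (f : EuclideanSpace ℝ (Fin n) × EuclideanSpace ℝ (Fin m) → EuclideanSpace ℝ (Fin n))
    (hfmaps : ∀ x ∈ U, ∀ w ∈ W, f (x, w) ∈ U)
    (V : EuclideanSpace ℝ (Fin n) → ℝ) (hV : ContDiffOn ℝ 2 V U)
    (hVnn : ∀ x ∈ U, 0 ≤ V x)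
    (hinv : ∀ x ∈ U, ∀ w ∈ W, V (f (x, w)) = V x)
    -- A2: ‖∇V‖² ≥ bV on the compact sublevel set K = V⁻¹([0,ε])
    (b ε : ℝ) (hb : 0 < b)
    (K : Set (EuclideanSpace ℝ (Fin n))) (hK : K = {x ∈ U | V x ≤ ε})
    (hgrad : ∀ x ∈ K, b * V x ≤ ‖gradient V x‖ ^ 2)
    -- A3: S_δ ⊆ U
    (δ : ℝ) (hδ : 0 < δ)
    (Sδ : Set (EuclideanSpace ℝ (Fin n))) (hSδ : Sδ = {x | Metric.infDist x K < δ})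
    (hSδU : Sδ ⊆ U)
    -- L = max of ‖∇V‖ on K, d > λ_max(D²V) on S_δ
    (L : ℝ) (hLpos : 0 < L) (hL : IsGreatest ((fun x => ‖gradient V x‖) '' K) L)
    (d : ℝ) (hdpos : 0 < d)
    (hd : ∀ x ∈ Sδ, ∀ v : EuclideanSpace ℝ (Fin n), v ≠ 0 →
      iteratedFDeriv ℝ 2 V x ![v, v] < d * ‖v‖ ^ 2)
    -- choice of α
    (α : ℝ) (hα : 0 < α) (hα2 : α < 2 / d) (hα3 : α < δ / L)
    -- trajectory
    (xt : ℕ → EuclideanSpace ℝ (Fin n)) (w : ℕ → EuclideanSpace ℝ (Fin m))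
    (hw : ∀ k, w k ∈ W) (hx0 : xt 0 ∈ K)
    (hstep : ∀ k, xt (k + 1) = f (xt k, w k) - α • gradient V (f (xt k, w k))) :
    ∀ k, V (xt k) ≤ (1 - b * (α - α ^ 2 * d / 2)) ^ k * V (xt 0) := by
  set ρ := 1 - b * (α - α ^ 2 * d / 2)
  have hαd : 0 < α - α ^ 2 * d / 2 := by
    nlinarith [(lt_div_iff₀ hdpos).mp hα2]
  have hSopen : IsOpen Sδ := hSδ ▸ isOpen_lt (continuous_infDist_pt K) continuous_const
  have hd' : ∀ x ∈ Sδ, ∀ v, iteratedFDeriv ℝ 2 V x ![v, v] ≤ d * ‖v‖ ^ 2 := fun x hx v => by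
    rcases eq_or_ne v 0 with rfl | hv
    · simpa using ((iteratedFDeriv ℝ 2 V x).map_coord_zero (m := ![0, 0]) 0 rfl).le
    · exact (hd x hx v hv).le
  have hdescentK : ∀ y ∈ K, y - α • gradient V y ∈ K ∧
      V (y - α • gradient V y) ≤ ρ * V y := by
    intro y hy
    have hball : ball y δ ⊆ Sδ := fun x hx => hSδ ▸ (infDist_le_dist_of_mem hy).trans_lt hx
    have hnear : y - α • gradient V y ∈ ball y δ := by
      rw [mem_ball, dist_self_sub_left, norm_smul, Real.norm_of_nonneg hα.le]
      calc α * ‖gradient V y‖ ≤ α * L := by gcongr; exact hL.2 ⟨y, hy, rfl⟩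
        _ < δ := (lt_div_iff₀ hLpos).mp hα3
    have hseg := ((convex_ball y δ).segment_subset (mem_ball_self hδ) hnear).trans hball
    have hdecay := gradient_step_le hSopen (hV.mono hSδU) hseg hd' (hgrad y hy) hαd.le
    rw [hK] at hy ⊢
    obtain ⟨hyU, hyε⟩ := hy
    exact ⟨⟨hSδU (hball hnear), by nlinarith [mul_nonneg (mul_nonneg hb.le hαd.le) (hVnn y hyU)]⟩,
      hdecay⟩
  have hfK : ∀ k, xt k ∈ K → f (xt k, w k) ∈ K ∧ V (f (xt k, w k)) = V (xt k) := by
    intro k hk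
    rw [hK] at hk ⊢
    have hVf := hinv _ hk.1 _ (hw k)
    exact ⟨⟨hfmaps _ hk.1 _ (hw k), hVf.trans_le hk.2⟩, hVf⟩
  have hmem : ∀ k, xt k ∈ K := fun k => Nat.rec hx0
    (fun k hk => hstep k ▸ (hdescentK _ (hfK k hk).1).1) k
  refine le_pow_mul_of_le_mul (fun k => hVnn _ (hK ▸ hmem k).1) fun k => ?_
  rw [hstep k, ← (hfK k (hmem k)).2]
  exact (hdescentK _ (hfK k (hmem k)).1).2

/-- Main discrete-time transversal extension theorem: under the assumptions
A1–A3, the modified trajectory `xt_{k+1} = f(xt_k, w_k) - α ∇V(f(xt_k, w_k))`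
starting in `V⁻¹([0,ε])` satisfies `V(xt_k) ≤ (1 - b(α - α²d/2))^k V(xt_0)`,
i.e. it converges to `V⁻¹(0)` exponentially fast. -/
theorem discrete_extension_main
    {n m : ℕ} (U : Set (EuclideanSpace ℝ (Fin n))) (W : Set (EuclideanSpace ℝ (Fin m)))
    (f : EuclideanSpace ℝ (Fin n) × EuclideanSpace ℝ (Fin m) → EuclideanSpace ℝ (Fin n))
    (hf : ContDiffOn ℝ 1 f (U ×ˢ W))
    (hfmaps : ∀ x ∈ U, ∀ w ∈ W, f (x, w) ∈ U)
    (V : EuclideanSpace ℝ (Fin n) → ℝ) (hV : ContDiffOn ℝ 2 V U)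
    (hVnn : ∀ x ∈ U, 0 ≤ V x)
    -- A1: V⁻¹(0) compact and nonempty, V ∘ f = V
    (hzero_cpt : IsCompact {x ∈ U | V x = 0}) (hzero_ne : {x ∈ U | V x = 0}.Nonempty)
    (hinv : ∀ x ∈ U, ∀ w ∈ W, V (f (x, w)) = V x)
    -- A2: ‖∇V‖² ≥ bV on the compact sublevel set K = V⁻¹([0,ε])
    (b ε : ℝ) (hb : 0 < b) (hε : 0 < ε)
    (K : Set (EuclideanSpace ℝ (Fin n))) (hK : K = {x ∈ U | V x ≤ ε})
    (hKc : IsCompact K)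
    (hgrad : ∀ x ∈ K, b * V x ≤ ‖gradient V x‖ ^ 2)
    -- A3: S_δ ⊆ U
    (δ : ℝ) (hδ : 0 < δ)
    (Sδ : Set (EuclideanSpace ℝ (Fin n))) (hSδ : Sδ = {x | Metric.infDist x K < δ})
    (hSδU : Sδ ⊆ U)
    -- L = max of ‖∇V‖ on K, d > λ_max(D²V) on S_δ
    (L : ℝ) (hLpos : 0 < L) (hL : IsGreatest ((fun x => ‖gradient V x‖) '' K) L)
    (d : ℝ) (hdpos : 0 < d)
    (hd : ∀ x ∈ Sδ, ∀ v : EuclideanSpace ℝ (Fin n), v ≠ 0 →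
      iteratedFDeriv ℝ 2 V x ![v, v] < d * ‖v‖ ^ 2)
    -- choice of α
    (α : ℝ) (hα : 0 < α) (hα2 : α < 2 / d) (hα3 : α < δ / L)
    -- trajectory
    (xt : ℕ → EuclideanSpace ℝ (Fin n)) (w : ℕ → EuclideanSpace ℝ (Fin m))
    (hw : ∀ k, w k ∈ W) (hx0 : xt 0 ∈ K)
    (hstep : ∀ k, xt (k + 1) = f (xt k, w k) - α • gradient V (f (xt k, w k))) :
    ∀ k, V (xt k) ≤ (1 - b * (α - α ^ 2 * d / 2)) ^ k * V (xt 0) :=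
  discrete_extension_main_general U W f hfmaps V hV hVnn hinv b ε hb K hK hgrad δ hδ Sδ hSδ hSδU L
    hLpos hL d hdpos hd α hα hα2 hα3 xt w hw hx0 hstep
end

section
/- For the modified quaternion dynamics q̃_{k+1} = q̃_k exp(Ω_k/2) - 4α q̃_k (q̄̃_k q̃_k - 1) exp(Ω_k/2) with Ω_k vector quaternions, writing r_k = ‖q̃_k‖², one has r_{k+1} = r_k (1 - 4α(r_k - 1))²; consequently if 0 < α is small enough and 1 - √ε ≤ r_0 ≤ 1 + √ε for ε < 1, then r_k → 1 exponentially fast. -/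
open Quaternion

lemma key_ineq (α s d : ℝ) (hα : 0 < α) (hα1 : α ≤ 1/32) (hα2 : 8*α ≤ 1 - s)
    (hs0 : 0 ≤ s) (hd : |d| ≤ s) :
    |(1 + d) * (1 - 4*α*d)^2 - 1| ≤ (1 - 4*α*(1-s)) * |d| := by
  have h1 : (1 + d) * (1 - 4*α*d)^2 - 1
      = d * (1 - 8*α + 16*α^2*d - 8*α*d + 16*α^2*d^2) := by ring
  rw [h1, abs_mul, mul_comm]
  have hs1 : s ≤ 1 := by nlinarith
  obtain ⟨hdl, hdr⟩ := abs_le.mp hd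
  have hb : (0:ℝ) ≤ 1 + s + 2*d - 4*α*d - 4*α*d^2 := by
    nlinarith [mul_nonneg (show (0:ℝ) ≤ d + s by linarith) (show (0:ℝ) ≤ 2 - 4*α by linarith),
      mul_nonneg hα.le (show (0:ℝ) ≤ s^2 - d^2 by nlinarith),
      mul_nonneg (mul_nonneg hα.le hs0) (show (0:ℝ) ≤ 1 - s by linarith)]
  have hF : |1 - 8*α + 16*α^2*d - 8*α*d + 16*α^2*d^2| ≤ 1 - 4*α*(1-s) := by
    rw [abs_le]
    constructor
    · nlinarith [sq_nonneg (α*d),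
        mul_nonneg (sq_nonneg α) (show (0:ℝ) ≤ d + s by linarith),
        mul_nonneg (sq_nonneg α) (show (0:ℝ) ≤ 1 - s by linarith),
        mul_le_mul_of_nonneg_left hdr hα.le,
        mul_nonneg hα.le hs0,
        mul_le_mul_of_nonneg_left hα1 hα.le]
    · nlinarith [mul_nonneg hα.le hb]
  exact mul_le_mul_of_nonneg_right hF (abs_nonneg d)

lemma norm_step (α : ℝ) (q' q e : ℍ[ℝ]) (he : ‖e‖ = 1)
    (hrec : q' = q * e - (4 * α) • (q * (star q * q - 1) * e)) :
    ‖q'‖ ^ 2 = ‖q‖ ^ 2 * (1 - 4 * α * (‖q‖ ^ 2 - 1)) ^ 2 := by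
  have hsq : star q * q = ((‖q‖^2 : ℝ) : ℍ[ℝ]) := by
    rw [star_mul_self]
    norm_cast
    rw [normSq_eq_norm_mul_self, sq]
  have h2 : q' = ((1 - 4*α*(‖q‖^2 - 1) : ℝ) : ℍ[ℝ]) * (q * e) := by
    rw [hrec, hsq]
    rw [show (((‖q‖^2:ℝ)):ℍ[ℝ]) - 1 = ((‖q‖^2 - 1 : ℝ):ℍ[ℝ]) by norm_cast]
    rw [show q * ((‖q‖^2 - 1:ℝ):ℍ[ℝ]) = ((‖q‖^2 - 1:ℝ):ℍ[ℝ]) * q from (coe_commutes _ _).symm]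
    rw [mul_assoc, coe_mul_eq_smul, smul_smul, ← coe_mul_eq_smul]
    rw [show ((1 - 4*α*(‖q‖^2-1) : ℝ):ℍ[ℝ]) = 1 - ((4*α*(‖q‖^2-1):ℝ):ℍ[ℝ]) by norm_cast]
    rw [sub_mul, one_mul]
  rw [h2, norm_mul, norm_mul, he, mul_one, Quaternion.norm_coe, Real.norm_eq_abs,
    mul_pow, sq_abs]
  ring

/-- For the modified quaternion dynamics
`q̃_{k+1} = q̃_k exp(Ω_k/2) - 4α q̃_k(q̄̃_k q̃_k - 1) exp(Ω_k/2)` with `Ω_k`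
vector quaternions, writing `r_k = ‖q̃_k‖²` one has
`r_{k+1} = r_k (1 - 4α(r_k - 1))²`; and for `α` small enough (depending only on
`ε < 1`) and `1 - √ε ≤ r_0 ≤ 1 + √ε`, `r_k → 1` exponentially fast. -/
theorem quaternion_modified_dynamics
    (ε : ℝ) (hε0 : 0 < ε) (hε1 : ε < 1) :
    ∃ α₀ > (0 : ℝ), ∀ α : ℝ, 0 < α → α < α₀ →
      ∀ q Ω : ℕ → ℍ[ℝ], (∀ k, (Ω k).re = 0) →
        (∀ k, q (k + 1) =
          q k * NormedSpace.exp (Ω k / 2) -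
            (4 * α) • (q k * (star (q k) * q k - 1) * NormedSpace.exp (Ω k / 2))) →
        (∀ k, ‖q (k + 1)‖ ^ 2 = ‖q k‖ ^ 2 * (1 - 4 * α * (‖q k‖ ^ 2 - 1)) ^ 2) ∧
          (1 - Real.sqrt ε ≤ ‖q 0‖ ^ 2 → ‖q 0‖ ^ 2 ≤ 1 + Real.sqrt ε →
            ∃ C : ℝ, 0 ≤ C ∧ ∃ ρ : ℝ, 0 ≤ ρ ∧ ρ < 1 ∧
              ∀ k, |‖q k‖ ^ 2 - 1| ≤ C * ρ ^ k) := by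
  set s := Real.sqrt ε with hs
  have hs0 : 0 < s := Real.sqrt_pos.mpr hε0
  have hs1 : s < 1 := by
    rw [hs, show (1:ℝ) = Real.sqrt 1 by simp]
    exact Real.sqrt_lt_sqrt hε0.le hε1
  refine ⟨min (1/32) ((1-s)/8), lt_min (by norm_num) (by linarith), ?_⟩
  intro α hα hαlt q Ω hΩ hrec
  have hα1 : α ≤ 1/32 := le_of_lt (lt_of_lt_of_le hαlt (min_le_left _ _))
  have hα2 : 8*α ≤ 1 - s := by
    have := lt_of_lt_of_le hαlt (min_le_right _ _); linarith
  have hexp : ∀ k, ‖NormedSpace.exp (Ω k / 2)‖ = 1 := by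
    intro k
    rw [Quaternion.norm_exp]
    have h2 : (Ω k / 2).re = 0 := by
      rw [div_eq_mul_inv, show ((2:ℍ[ℝ])⁻¹) = (((2:ℝ)⁻¹ : ℝ):ℍ[ℝ]) by
        rw [show (2:ℍ[ℝ]) = ((2:ℝ):ℍ[ℝ]) from by exact_mod_cast rfl, Quaternion.coe_inv]]
      rw [mul_coe_eq_smul]
      simp [hΩ k]
    rw [h2, NormedSpace.exp_zero]
    simp
  have hstep : ∀ k, ‖q (k + 1)‖ ^ 2 = ‖q k‖ ^ 2 * (1 - 4 * α * (‖q k‖ ^ 2 - 1)) ^ 2 :=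
    fun k => norm_step α _ _ _ (hexp k) (hrec k)
  refine ⟨hstep, fun h0l h0r => ?_⟩
  refine ⟨s, hs0.le, 1 - 4*α*(1-s), by nlinarith, by nlinarith, ?_⟩
  intro k
  induction k with
  | zero =>
    rw [pow_zero, mul_one, abs_le]
    constructor <;> linarith
  | succ n ih =>
    have hdn : |‖q n‖ ^ 2 - 1| ≤ s := by
      refine le_trans ih ?_
      calc s * (1 - 4*α*(1-s)) ^ n ≤ s * 1 ^ n := by
            apply mul_le_mul_of_nonneg_left _ hs0.le
            apply pow_le_pow_left₀ (by nlinarith) (by nlinarith)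
        _ = s := by simp
    have key := key_ineq α s (‖q n‖ ^ 2 - 1) hα hα1 hα2 hs0.le hdn
    have heq : ‖q (n+1)‖ ^ 2 - 1
        = (1 + (‖q n‖ ^ 2 - 1)) * (1 - 4*α*(‖q n‖ ^ 2 - 1))^2 - 1 := by
      rw [hstep n]; ring
    rw [heq]
    calc |(1 + (‖q n‖ ^ 2 - 1)) * (1 - 4*α*(‖q n‖ ^ 2 - 1))^2 - 1|
        ≤ (1 - 4*α*(1-s)) * |‖q n‖ ^ 2 - 1| := key
      _ ≤ (1 - 4*α*(1-s)) * (s * (1 - 4*α*(1-s)) ^ n) := by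
          apply mul_le_mul_of_nonneg_left ih (by nlinarith)
      _ = s * (1 - 4*α*(1-s)) ^ (n+1) := by ring
end
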